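/- Let e₀, e₁, e₂, e₃ be the standard basis of ℂ⁴, and call a 4×4 complex matrix A block-diagonal if A(i,j) = 0 whenever i ∈ {0,1} and j ∈ {2,3}, or i ∈ {2,3} and j ∈ {0,1}. Let Ψ = (e₀ ⊗ e₀ + e₂ ⊗ e₂)/√2 ∈ ℂ⁴ ⊗ ℂ⁴ ≅ ℂ¹⁶, and let P = |Ψ⟩⟨Ψ| be the corresponding rank-one 16×16 matrix. Then P does not belong to the ℂ-linear span of the set of Kronecker products {A ⊗ B : A, B ∈ M₄(ℂ), A and B block-diagonal}. -/

import Mathlib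

/-!
The entry at row `(0,0)`, column `(2,2)` is a linear functional on `16 × 16` matrices. On a
Kronecker product `A ⊗ B` it equals `A₀₂ B₀₂`, which vanishes when `A` is block-diagonal because
`e₀` and `e₂` lie in different sectors; hence it vanishes on the whole span. For `P = |Ψ⟩⟨Ψ|`
this entry is `Ψ₀₀ Ψ₂₂ = 1/2`, the coherence between the two sectors that `Ψ` superposes.
-/

open Matrix

/-- A `4 × 4` complex matrix is block-diagonal w.r.t. the splitting
`ℂ⁴ = span {e₀, e₁} ⊕ span {e₂, e₃}` if its off-diagonal blocks vanish. -/
def IsBlockDiag4 (A : Matrix (Fin 4) (Fin 4) ℂ) : Prop :=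
  ∀ i j : Fin 4,
    (((i : ℕ) < 2 ∧ 2 ≤ (j : ℕ)) ∨ (2 ≤ (i : ℕ) ∧ (j : ℕ) < 2)) → A i j = 0

/-- The entangled unit vector `Ψ = (e₀ ⊗ e₀ + e₂ ⊗ e₂) / √2` of `ℂ⁴ ⊗ ℂ⁴ ≅ ℂ¹⁶`. -/
noncomputable def dqtPsi : Fin 4 × Fin 4 → ℂ := fun p =>
  ((1 / Real.sqrt 2 : ℝ) : ℂ) *
    (if p = ((0 : Fin 4), (0 : Fin 4)) then 1
     else if p = ((2 : Fin 4), (2 : Fin 4)) then 1 else 0)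

/-- The rank-one projector `P = |Ψ⟩⟨Ψ|` on `ℂ¹⁶`. -/
noncomputable def dqtProj : Matrix (Fin 4 × Fin 4) (Fin 4 × Fin 4) ℂ :=
  Matrix.of fun p q => dqtPsi p * star (dqtPsi q)

theorem Matrix.apply_eq_zero_of_mem_span {R α m n : Type*} [Semiring R] [AddCommMonoid α]
    [Module R α] {s : Set (Matrix m n α)} {i : m} {j : n} (hs : ∀ N ∈ s, N i j = 0)
    {M : Matrix m n α} (hM : M ∈ Submodule.span R s) : M i j = 0 :=
  (Submodule.span_le (p := LinearMap.ker (entryLinearMap R α i j))).mpr hs hM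

theorem Matrix.kroneckerMap_mul_apply_eq_zero_of_left {α l m n p : Type*} [MulZeroClass α]
    {A : Matrix l m α} (B : Matrix n p α) {i : l} {j : m} (hA : A i j = 0) (k : n) (k' : p) :
    kroneckerMap (· * ·) A B (i, k) (j, k') = 0 := by
  simp [kroneckerMap_apply, hA]

theorem IsBlockDiag4.apply_zero_two {A : Matrix (Fin 4) (Fin 4) ℂ} (hA : IsBlockDiag4 A) :
    A 0 2 = 0 :=
  hA 0 2 (Or.inl ⟨by norm_num, by norm_num⟩)

theorem dqtProj_apply_zero_two : dqtProj (0, 0) (2, 2) = 1 / 2 := by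
  have hsqrt : ((Real.sqrt 2 : ℝ) : ℂ) ^ 2 = 2 := by
    rw [← Complex.ofReal_pow, Real.sq_sqrt zero_le_two, Complex.ofReal_ofNat]
  simp only [dqtProj, dqtPsi, of_apply, Prod.ext_iff]
  norm_num
  rw [← mul_inv, ← sq, hsqrt, one_div]

/-- Doubled quantum theory violates Local Tomography: the pure state `P = |Ψ⟩⟨Ψ|` of the
composite of two doubled qubits does not lie in the linear span of Kronecker products of
block-diagonal (single doubled-qubit) matrices. -/
theorem dqt_violates_local_tomography :
    dqtProj ∉ Submodule.span ℂ
      {N : Matrix (Fin 4 × Fin 4) (Fin 4 × Fin 4) ℂ |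
        ∃ A B : Matrix (Fin 4) (Fin 4) ℂ, IsBlockDiag4 A ∧ IsBlockDiag4 B ∧
          N = Matrix.kroneckerMap (· * ·) A B} := by
  intro hP
  have hentry : dqtProj (0, 0) (2, 2) = 0 := by
    refine Matrix.apply_eq_zero_of_mem_span ?_ hP
    rintro _ ⟨A, B, hA, -, rfl⟩
    exact kroneckerMap_mul_apply_eq_zero_of_left B hA.apply_zero_two 0 2
  rw [dqtProj_apply_zero_two] at hentry
  norm_num at hentry
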